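/- arXiv:2007.07030 — 3 statements merged into one kernel-verified Lean document; each statement's English description precedes it below -/
import Mathlib

section
/- For every integer n ≥ 1 and every integer m ≥ 1, the m-th positive zero j_{n+1/2,m} of the Bessel function J_{n+1/2} satisfies j_{n+1/2,m} > (m−1)π + √((n+1/2)(n+5/2)); consequently, j_{n+1/2,m}² > (m−1)²π² + (n+1/2)(n+5/2). -/
/-- `sbJ k x = J_{k - 1/2}(x)`, the Bessel function of the first kind of half-integer
order, defined from `J_{-1/2}(x) = √(2/(πx)) cos x`, `J_{1/2}(x) = √(2/(πx)) sin x`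
and the recurrence `J_{ν+1}(x) = (2ν/x) J_ν(x) − J_{ν−1}(x)`. -/
noncomputable def sbJ : ℕ → ℝ → ℝ
  | 0, x => Real.sqrt (2 / (Real.pi * x)) * Real.cos x
  | 1, x => Real.sqrt (2 / (Real.pi * x)) * Real.sin x
  | (k + 2), x => ((2 * (k : ℝ) + 1) / x) * sbJ (k + 1) x - sbJ k x

/-- `besselJhalf n x = J_{n+1/2}(x)`. -/
noncomputable def besselJhalf (n : ℕ) (x : ℝ) : ℝ := sbJ (n + 1) x

/-!
Put `u = riccatiBessel (n + 1)`, so that `J_{n+1/2}(x) = √(2/(πx)) u(x)`. Then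
`u'' + (1 - L/x²) u = 0` with `L = n(n+1)`, and `u(x) → 0` as `x → 0⁺`.

Since `1 - L/x² < 1`, Sturm comparison with `sin (x - a)` (a Wronskian argument) puts consecutive
zeros of `u` more than `π` apart. For the first zero `b`, `u` is convex on `(0, min b √L)`,
and `u → 0` at `0`, so `u' > 0` at `min b √L`. This rules out `b ≤ √L`; if `b > √L`, comparison
with `cos (ω (x - √L))`, `ω² = 1 - L/b²`, forces `ω (b - √L) > π/2`, which an elementary estimate
contradicts as soon as `b² ≤ (n + 1/2)(n + 5/2)`.
-/

open Set Filter Topology Real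

lemma IsPreconnected.pos_or_neg_of_ne_zero {X : Type*} [TopologicalSpace X] {s : Set X}
    (hs : IsPreconnected s) {f : X → ℝ} (hf : ContinuousOn f s) (hne : ∀ x ∈ s, f x ≠ 0) :
    (∀ x ∈ s, 0 < f x) ∨ (∀ x ∈ s, f x < 0) := by
  by_contra! h
  obtain ⟨⟨x, hx, hfx⟩, y, hy, hfy⟩ := h
  obtain ⟨z, hz, hfz⟩ := hs.intermediate_value hx hy hf ⟨hfx, hfy⟩
  exact hne z hz hfz

lemma HasDerivAt.nonpos_of_eq_zero_of_pos_left {f : ℝ → ℝ} {d a b : ℝ} (hd : HasDerivAt f d b)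
    (hab : a < b) (hfb : f b = 0) (hpos : ∀ x ∈ Ioo a b, 0 < f x) : d ≤ 0 := by
  refine le_of_tendsto hd.tendsto_slope_zero_left ?_
  filter_upwards [Ioo_mem_nhdsLT (sub_neg.2 hab)] with t ht
  rw [hfb, sub_zero, smul_eq_mul]
  exact mul_nonpos_of_nonpos_of_nonneg (inv_nonpos.2 ht.2.le)
    (hpos _ ⟨by linarith [ht.1], by linarith [ht.2]⟩).le

lemma nonneg_of_deriv_nonneg_of_tendsto_zero {g g' : ℝ → ℝ}
    (hg : ∀ x > 0, HasDerivAt g (g' x) x) (hg' : ∀ x > 0, 0 ≤ g' x)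
    (hlim : Tendsto g (𝓝[>] 0) (𝓝 0)) {x : ℝ} (hx : 0 < x) : 0 ≤ g x := by
  have hmono : MonotoneOn g (Ioi 0) := by
    refine monotoneOn_of_deriv_nonneg (convex_Ioi 0)
      (fun y hy => (hg y hy).continuousAt.continuousWithinAt)
      (fun y hy => (hg y (interior_subset hy)).differentiableAt.differentiableWithinAt)
      fun y hy => ?_
    rw [interior_Ioi] at hy
    rw [(hg y hy).deriv]
    exact hg' y hy
  refine le_of_tendsto hlim ?_
  filter_upwards [Ioo_mem_nhdsGT hx] with y hy using hmono hy.1 hx hy.2.le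

lemma abs_le_of_abs_deriv_le_of_tendsto_zero {F F' G G' : ℝ → ℝ}
    (hF : ∀ x > 0, HasDerivAt F (F' x) x) (hG : ∀ x > 0, HasDerivAt G (G' x) x)
    (hbound : ∀ x > 0, |F' x| ≤ G' x)
    (hF0 : Tendsto F (𝓝[>] 0) (𝓝 0)) (hG0 : Tendsto G (𝓝[>] 0) (𝓝 0)) {x : ℝ} (hx : 0 < x) :
    |F x| ≤ G x := by
  have hsub : 0 ≤ G x - F x := nonneg_of_deriv_nonneg_of_tendsto_zero (g := fun y => G y - F y)
    (fun y hy => (hG y hy).sub (hF y hy))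
    (fun y hy => sub_nonneg.2 ((le_abs_self _).trans (hbound y hy)))
    (by simpa using hG0.sub hF0) hx
  have hadd : 0 ≤ G x + F x := nonneg_of_deriv_nonneg_of_tendsto_zero (g := fun y => G y + F y)
    (fun y hy => (hG y hy).add (hF y hy))
    (fun y hy => by linarith [neg_abs_le (F' y), hbound y hy])
    (by simpa using hG0.add hF0) hx
  rw [abs_le]
  constructor <;> linarith

lemma pos_of_monotoneOn_deriv_of_tendsto_zero {f f' : ℝ → ℝ} {d : ℝ} (hd : 0 < d)
    (hf : ∀ x ∈ Ioo 0 d, HasDerivAt f (f' x) x) (hmono : MonotoneOn f' (Ioc 0 d))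
    (hlim : Tendsto f (𝓝[>] 0) (𝓝 0)) (hpos : ∀ x ∈ Ioo 0 d, 0 < f x) : 0 < f' d := by
  have hc : d / 2 ∈ Ioo 0 d := ⟨by positivity, by linarith⟩
  obtain ⟨ε, hfε, hε⟩ : ∃ ε, f ε < f (d / 2) ∧ ε ∈ Ioo 0 (d / 2) :=
    ((hlim.eventually (gt_mem_nhds (hpos _ hc))).and (Ioo_mem_nhdsGT hc.1)).exists
  have hsub : Icc ε (d / 2) ⊆ Ioo 0 d := fun x hx => ⟨hε.1.trans_le hx.1, hx.2.trans_lt hc.2⟩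
  obtain ⟨ξ, hξ, hξslope⟩ := exists_hasDerivAt_eq_slope f f' hε.2
    (fun x hx => (hf x (hsub hx)).continuousAt.continuousWithinAt)
    (fun x hx => hf x (hsub (Ioo_subset_Icc_self hx)))
  have hξpos : 0 < f' ξ := by
    rw [hξslope]
    exact div_pos (sub_pos.2 hfε) (sub_pos.2 hε.2)
  exact hξpos.trans_le (hmono ⟨hε.1.trans hξ.1, by linarith [hξ.2, hc.2]⟩ ⟨hd, le_rfl⟩
    (by linarith [hξ.2, hc.2]))

def SolvesLinearODE (q : ℝ → ℝ) (s : Set ℝ) (f f' : ℝ → ℝ) : Prop :=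
  ∀ x ∈ s, HasDerivAt f (f' x) x ∧ HasDerivAt f' (-(q x * f x)) x

lemma solvesLinearODE_sin_sub (a : ℝ) :
    SolvesLinearODE (fun _ => 1) univ (fun y => sin (y - a)) (fun y => cos (y - a)) :=
  fun x _ => ⟨by simpa using (hasDerivAt_sin (x - a)).comp_sub_const x a,
    by simpa using (hasDerivAt_cos (x - a)).comp_sub_const x a⟩

lemma solvesLinearODE_cos_mul_sub (ω a : ℝ) :
    SolvesLinearODE (fun _ => ω ^ 2) univ (fun y => cos (ω * (y - a)))
      (fun y => -(ω * sin (ω * (y - a)))) := by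
  intro x _
  have hlin : HasDerivAt (fun y => ω * (y - a)) ω x := by
    simpa using ((hasDerivAt_id x).sub_const a).const_mul ω
  exact ⟨((hasDerivAt_cos _).comp x hlin).congr_deriv (by ring),
    (((hasDerivAt_sin _).comp x hlin).const_mul ω).neg.congr_deriv (by ring)⟩

lemma sqrt_one_sub_div_sq_mul_sub_sqrt_le {N b : ℝ} (hN : 1 ≤ N) (hb : √(N * (N + 1)) < b)
    (hbR : b ^ 2 ≤ (N + 1 / 2) * (N + 5 / 2)) :
    √(1 - N * (N + 1) / b ^ 2) * (b - √(N * (N + 1))) ≤ π / 2 := by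
  set L := N * (N + 1)
  set a := √L
  have hL : 0 < L := by positivity
  have ha : a ^ 2 = L := sq_sqrt hL.le
  have ha0 : 0 < a := sqrt_pos.2 hL
  have hb0 : 0 < b := ha0.trans hb
  have hLb : L < b ^ 2 := ha ▸ pow_lt_pow_left₀ hb ha0.le two_ne_zero
  set D := b ^ 2 - L
  have hD : 0 < D := sub_pos.2 hLb
  have hDc : D ≤ 2 * N + 5 / 4 := by simp only [D, L]; linarith
  have hcubic : (2 * N + 5 / 4) ^ 3 ≤ 9 * L ^ 2 := by
    have h := sub_nonneg.2 hN
    nlinarith [mul_nonneg h h, mul_nonneg (mul_nonneg h h) h,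
      mul_nonneg (mul_nonneg h h) (mul_nonneg h h)]
  have hpi : 9 ≤ π ^ 2 := by nlinarith [pi_gt_three]
  have hsq : 4 * L * (b - a) ^ 2 ≤ D ^ 2 := by
    have : D = (b + a) * (b - a) := by simp only [D]; rw [← ha]; ring
    rw [this, ← ha]
    calc 4 * a ^ 2 * (b - a) ^ 2 = (2 * a * (b - a)) ^ 2 := by ring
      _ ≤ ((b + a) * (b - a)) ^ 2 := pow_le_pow_left₀ (by nlinarith)
          (mul_le_mul_of_nonneg_right (by linarith) (by linarith)) 2
  have hkey : L * (4 * D * (b - a) ^ 2) ≤ L * (π ^ 2 * b ^ 2) := calc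
    L * (4 * D * (b - a) ^ 2) = D * (4 * L * (b - a) ^ 2) := by ring
    _ ≤ D * D ^ 2 := mul_le_mul_of_nonneg_left hsq hD.le
    _ ≤ (2 * N + 5 / 4) ^ 3 := by rw [← pow_succ']; exact pow_le_pow_left₀ hD.le hDc 3
    _ ≤ π ^ 2 * L * L := by nlinarith
    _ ≤ L * (π ^ 2 * b ^ 2) := by
      nlinarith [mul_le_mul_of_nonneg_left hLb.le (by positivity : 0 ≤ π ^ 2 * L)]
  have hK : 1 - L / b ^ 2 = D / b ^ 2 := by simp only [D]; field_simp
  refine le_of_pow_le_pow_left₀ two_ne_zero (by positivity) ?_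
  rw [mul_pow, hK, sq_sqrt (by positivity), div_mul_eq_mul_div, div_le_iff₀ (by positivity)]
  nlinarith [le_of_mul_le_mul_left hkey hL]

namespace SolvesLinearODE

variable {q : ℝ → ℝ} {s : Set ℝ} {f f' : ℝ → ℝ}

lemma neg (h : SolvesLinearODE q s f f') : SolvesLinearODE q s (-f) (-f') := fun x hx =>
  ⟨(h x hx).1.neg, by simpa only [Pi.neg_apply, mul_neg] using (h x hx).2.neg⟩

lemma mono {t : Set ℝ} (h : SolvesLinearODE q s f f') (hts : t ⊆ s) :
    SolvesLinearODE q t f f' := fun x hx => h x (hts hx)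

lemma continuousOn (h : SolvesLinearODE q s f f') : ContinuousOn f s := fun x hx =>
  (h x hx).1.continuousAt.continuousWithinAt

lemma hasDerivAt_wronskian {p : ℝ → ℝ} {g g' : ℝ → ℝ} (hf : SolvesLinearODE q s f f')
    (hg : SolvesLinearODE p s g g') {x : ℝ} (hx : x ∈ s) :
    HasDerivAt (fun y => f y * g' y - f' y * g y) ((q x - p x) * f x * g x) x := by
  obtain ⟨hf₁, hf₂⟩ := hf x hx
  obtain ⟨hg₁, hg₂⟩ := hg x hx
  exact ((hf₁.mul hg₂).sub (hf₂.mul hg₁)).congr_deriv (by ring)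

theorem add_pi_lt {a b : ℝ}
    (hf : SolvesLinearODE q (Icc a b) f f') (hq : ∀ x ∈ Ioo a b, q x < 1) (hab : a < b)
    (hfa : f a = 0) (hfb : f b = 0) (hne : ∀ x ∈ Ioo a b, f x ≠ 0) : a + π < b := by
  wlog hpos : ∀ x ∈ Ioo a b, 0 < f x generalizing f f'
  · obtain hpos' | hneg := isPreconnected_Ioo.pos_or_neg_of_ne_zero
      ((hf.mono Ioo_subset_Icc_self).continuousOn) hne
    · exact absurd hpos' hpos
    · exact this hf.neg (by simp [hfa]) (by simp [hfb]) (fun x hx => by simpa using hne x hx)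
        fun x hx => by simpa using hneg x hx
  by_contra! hba
  set W := fun y => f y * cos (y - a) - f' y * sin (y - a)
  have hW : ∀ x ∈ Icc a b, HasDerivAt W ((q x - 1) * f x * sin (x - a)) x := fun x hx =>
    hf.hasDerivAt_wronskian ((solvesLinearODE_sin_sub a).mono (subset_univ _)) hx
  have hanti : StrictAntiOn W (Icc a b) := by
    refine strictAntiOn_of_deriv_neg (convex_Icc a b)
      (fun x hx => (hW x hx).continuousAt.continuousWithinAt) fun x hx => ?_
    rw [interior_Icc] at hx
    rw [(hW x (Ioo_subset_Icc_self hx)).deriv]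
    have hsin : 0 < sin (x - a) :=
      sin_pos_of_pos_of_lt_pi (by linarith [hx.1]) (by linarith [hx.2])
    exact mul_neg_of_neg_of_pos (mul_neg_of_neg_of_pos (sub_neg.2 (hq x hx)) (hpos x hx)) hsin
  have hWb : 0 ≤ W b := by
    have hf'b : f' b ≤ 0 :=
      (hf b (right_mem_Icc.2 hab.le)).1.nonpos_of_eq_zero_of_pos_left hab hfb hpos
    have hsin : 0 ≤ sin (b - a) := sin_nonneg_of_nonneg_of_le_pi (by linarith) (by linarith)
    simp only [W, hfb, zero_mul, zero_sub, neg_nonneg]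
    exact mul_nonpos_of_nonpos_of_nonneg hf'b hsin
  have hWa : W a = 0 := by simp [W, hfa]
  linarith [hanti (left_mem_Icc.2 hab.le) (right_mem_Icc.2 hab.le) hab]

theorem pi_div_two_lt_mul {ω a b : ℝ}
    (hf : SolvesLinearODE q (Icc a b) f f') (hq : ∀ x ∈ Ioo a b, q x ≤ ω ^ 2) (hω : 0 ≤ ω)
    (hab : a < b) (hf'a : 0 < f' a) (hfb : f b = 0) (hpos : ∀ x ∈ Ioo a b, 0 < f x) :
    π / 2 < ω * (b - a) := by
  by_contra! hωb
  have hcos : ∀ x ∈ Icc a b, 0 ≤ cos (ω * (x - a)) := fun x hx => by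
    have h₀ : 0 ≤ ω * (x - a) := mul_nonneg hω (by linarith [hx.1])
    have h₁ : ω * (x - a) ≤ ω * (b - a) := mul_le_mul_of_nonneg_left (by linarith [hx.2]) hω
    exact cos_nonneg_of_mem_Icc ⟨by linarith [pi_pos], by linarith⟩
  set W := fun y => f y * -(ω * sin (ω * (y - a))) - f' y * cos (ω * (y - a))
  have hW : ∀ x ∈ Icc a b, HasDerivAt W ((q x - ω ^ 2) * f x * cos (ω * (x - a))) x :=
    fun x hx =>
      hf.hasDerivAt_wronskian ((solvesLinearODE_cos_mul_sub ω a).mono (subset_univ _)) hx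
  have hanti : AntitoneOn W (Icc a b) := by
    refine antitoneOn_of_deriv_nonpos (convex_Icc a b)
      (fun x hx => (hW x hx).continuousAt.continuousWithinAt)
      (fun x hx => (hW x (interior_subset hx)).differentiableAt.differentiableWithinAt)
      fun x hx => ?_
    rw [interior_Icc] at hx
    have hx' := Ioo_subset_Icc_self hx
    rw [(hW x hx').deriv]
    exact mul_nonpos_of_nonpos_of_nonneg
      (mul_nonpos_of_nonpos_of_nonneg (sub_nonpos.2 (hq x hx)) (hpos x hx).le) (hcos x hx')
  have hWb : 0 ≤ W b := by
    have hf'b : f' b ≤ 0 :=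
      (hf b (right_mem_Icc.2 hab.le)).1.nonpos_of_eq_zero_of_pos_left hab hfb hpos
    simp only [W, hfb, zero_mul, zero_sub, neg_nonneg]
    exact mul_nonpos_of_nonpos_of_nonneg hf'b (hcos b (right_mem_Icc.2 hab.le))
  have hWa : W a = -f' a := by simp [W]
  linarith [hanti (left_mem_Icc.2 hab.le) (right_mem_Icc.2 hab.le) hab.le]

theorem lt_sq_of_first_zero {N : ℝ} (hN : 1 ≤ N)
    (hf : SolvesLinearODE (fun x => 1 - N * (N + 1) / x ^ 2) (Ioi 0) f f')
    (hlim : Tendsto f (𝓝[>] 0) (𝓝 0)) {b : ℝ} (hb : 0 < b) (hfb : f b = 0)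
    (hne : ∀ x ∈ Ioo 0 b, f x ≠ 0) : (N + 1 / 2) * (N + 5 / 2) < b ^ 2 := by
  wlog hpos : ∀ x ∈ Ioo 0 b, 0 < f x generalizing f f'
  · obtain hpos' | hneg := isPreconnected_Ioo.pos_or_neg_of_ne_zero
      ((hf.mono Ioo_subset_Ioi_self).continuousOn) hne
    · exact absurd hpos' hpos
    · exact this hf.neg (by simpa [Pi.neg_def] using hlim.neg) (by simp [hfb])
        (fun x hx => by simpa using hne x hx) fun x hx => by simpa using hneg x hx
  by_contra! hbR
  set L := N * (N + 1)
  have hL : 0 < L := by positivity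
  -- on `(0, d)`, `f'' = (L / x² - 1) f ≥ 0`
  have hf'_pos : ∀ d, 0 < d → d ≤ b → d ^ 2 ≤ L → 0 < f' d := by
    intro d hd hdb hdL
    have hmono : MonotoneOn f' (Ioc 0 d) := by
      refine monotoneOn_of_deriv_nonneg (convex_Ioc 0 d)
        (fun x hx => (hf x hx.1).2.continuousAt.continuousWithinAt)
        (fun x hx => (hf x (Ioc_subset_Ioi_self (interior_subset hx))).2.differentiableAt
          |>.differentiableWithinAt) fun x hx => ?_
      rw [interior_Ioc] at hx
      rw [(hf x hx.1).2.deriv]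
      have hx2 : x ^ 2 ≤ L := (pow_le_pow_left₀ hx.1.le hx.2.le 2).trans hdL
      have hq : 1 - L / x ^ 2 ≤ 0 := sub_nonpos.2 ((one_le_div (pow_pos hx.1 2)).2 hx2)
      nlinarith [hpos x ⟨hx.1, hx.2.trans_le hdb⟩]
    exact pos_of_monotoneOn_deriv_of_tendsto_zero hd (fun x hx => (hf x hx.1).1) hmono hlim
      fun x hx => hpos x ⟨hx.1, hx.2.trans_le hdb⟩
  rcases le_or_gt b √L with hbL | hLb
  · have hf'b := (hf b hb).1.nonpos_of_eq_zero_of_pos_left hb hfb hpos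
    have hb2 : b ^ 2 ≤ L := (le_sqrt' hb).1 hbL
    linarith [hf'_pos b hb le_rfl hb2]
  · have hK : L / b ^ 2 ≤ 1 := (div_le_one (by positivity)).2 ((sqrt_lt' hb).1 hLb).le
    have hq : ∀ x ∈ Ioo √L b, 1 - L / x ^ 2 ≤ √(1 - L / b ^ 2) ^ 2 := fun x hx => by
      have hx0 : 0 < x := (sqrt_nonneg L).trans_lt hx.1
      rw [sq_sqrt (sub_nonneg.2 hK)]
      exact sub_le_sub_left (div_le_div_of_nonneg_left hL.le (by positivity)
        (pow_le_pow_left₀ hx0.le hx.2.le 2)) 1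
    have hsub : Icc √L b ⊆ Ioi 0 := fun x hx => (sqrt_pos.2 hL).trans_le hx.1
    have := (hf.mono hsub).pi_div_two_lt_mul hq (sqrt_nonneg _) hLb
      (hf'_pos √L (sqrt_pos.2 hL) hLb.le (sq_sqrt hL.le).le) hfb
      fun x hx => hpos x ⟨hsub (Ioo_subset_Icc_self hx), hx.2⟩
    linarith [sqrt_one_sub_div_sq_mul_sub_sqrt_le hN hLb hbR]

end SolvesLinearODE

/-- `riccatiBessel (n + 1) x = x jₙ(x)` is the Riccati–Bessel function `Sₙ`; the index is shifted
so that `riccatiBessel 0 = cos` starts the recurrence. -/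
noncomputable def riccatiBessel : ℕ → ℝ → ℝ
  | 0, x => cos x
  | 1, x => sin x
  | (k + 2), x => ((2 * (k : ℝ) + 1) / x) * riccatiBessel (k + 1) x - riccatiBessel k x

lemma riccatiBessel_add_two (k : ℕ) (x : ℝ) :
    riccatiBessel (k + 2) x = (2 * k + 1) / x * riccatiBessel (k + 1) x - riccatiBessel k x :=
  rfl

lemma sbJ_eq_sqrt_mul_riccatiBessel (k : ℕ) (x : ℝ) :
    sbJ k x = √(2 / (π * x)) * riccatiBessel k x := by
  induction k using Nat.twoStepInduction with
  | zero => rfl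
  | one => rfl
  | more k ih₁ ih₂ =>
    rw [sbJ, ih₁, ih₂, riccatiBessel_add_two]
    ring

lemma besselJhalf_eq_zero_iff (n : ℕ) {x : ℝ} (hx : 0 < x) :
    besselJhalf n x = 0 ↔ riccatiBessel (n + 1) x = 0 := by
  rw [besselJhalf, sbJ_eq_sqrt_mul_riccatiBessel, mul_eq_zero,
    or_iff_right (sqrt_pos.2 (by positivity)).ne']

lemma hasDerivAt_const_div (c : ℝ) {x : ℝ} (hx : x ≠ 0) :
    HasDerivAt (fun y => c / y) (-c / x ^ 2) x := by
  simp_rw [div_eq_mul_inv]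
  exact ((hasDerivAt_inv hx).const_mul c).congr_deriv (by ring)

lemma hasDerivAt_riccatiBessel (n : ℕ) {x : ℝ} (hx : x ≠ 0) :
    HasDerivAt (riccatiBessel (n + 1))
      (riccatiBessel n x - n / x * riccatiBessel (n + 1) x) x := by
  induction n using Nat.twoStepInduction with
  | zero => simpa [riccatiBessel] using hasDerivAt_sin x
  | one =>
    have h2 : riccatiBessel 2 = fun y => 1 / y * sin y - cos y := by
      funext y
      simp [riccatiBessel]
    rw [h2]
    refine (((hasDerivAt_const_div 1 hx).mul (hasDerivAt_sin x)).sub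
      (hasDerivAt_cos x)).congr_deriv ?_
    simp only [riccatiBessel]
    field_simp
    ring
  | more k ih₁ ih₂ =>
    rw [show k + 1 + 1 = k + 2 from rfl] at ih₂
    have h3 : riccatiBessel (k + 2 + 1) = fun y =>
        (2 * ((k + 1 : ℕ) : ℝ) + 1) / y * riccatiBessel (k + 2) y - riccatiBessel (k + 1) y :=
      funext fun y => riccatiBessel_add_two (k + 1) y
    rw [h3]
    refine (((hasDerivAt_const_div _ hx).mul ih₂).sub ih₁).congr_deriv ?_
    simp only [riccatiBessel_add_two k x]
    push_cast
    field_simp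
    ring

lemma solvesLinearODE_riccatiBessel (n : ℕ) :
    SolvesLinearODE (fun x => 1 - n * (n + 1) / x ^ 2) (Ioi 0) (riccatiBessel (n + 1))
      (fun y => riccatiBessel n y - n / y * riccatiBessel (n + 1) y) := by
  intro x hx
  have hx : x ≠ 0 := hx.ne'
  refine ⟨hasDerivAt_riccatiBessel n hx, ?_⟩
  cases n with
  | zero => simpa [riccatiBessel] using hasDerivAt_cos x
  | succ k =>
    refine ((hasDerivAt_riccatiBessel k hx).sub
      ((hasDerivAt_const_div _ hx).mul (hasDerivAt_riccatiBessel (k + 1) hx))).congr_deriv ?_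
    rw [riccatiBessel_add_two k x]
    push_cast
    field_simp
    ring

lemma tendsto_pow_mul_riccatiBessel (k : ℕ) :
    Tendsto (fun x => x ^ k * riccatiBessel (k + 1) x) (𝓝[>] 0) (𝓝 0) := by
  have hcont {g : ℝ → ℝ} (hg : Continuous g) (h0 : g 0 = 0) : Tendsto g (𝓝[>] 0) (𝓝 0) :=
    tendsto_nhdsWithin_of_tendsto_nhds (hg.tendsto' 0 0 h0)
  induction k using Nat.twoStepInduction with
  | zero => simpa [riccatiBessel] using hcont continuous_sin sin_zero
  | one =>
    refine (hcont (g := fun x => sin x - x * cos x) (by fun_prop) (by simp)).congr' ?_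
    filter_upwards [self_mem_nhdsWithin] with x (hx : 0 < x)
    simp only [riccatiBessel]
    field_simp
    ring
  | more k ih₁ ih₂ =>
    have h := (ih₂.const_mul (2 * (k : ℝ) + 3)).sub
      ((hcont (g := fun x => x ^ 2) (by fun_prop) (by simp)).mul ih₁)
    rw [mul_zero, zero_mul, sub_zero] at h
    refine h.congr' ?_
    filter_upwards [self_mem_nhdsWithin] with x (hx : 0 < x)
    simp only [riccatiBessel_add_two (k + 1) x]
    push_cast
    field_simp
    ring

lemma abs_riccatiBessel_le (n : ℕ) {x : ℝ} (hx : 0 < x) :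
    |riccatiBessel (n + 1) x| ≤ x ^ (n + 1) := by
  induction n generalizing x with
  | zero => simpa [riccatiBessel, abs_of_pos hx] using abs_sin_le_abs (x := x)
  | succ n ih =>
    have hF : ∀ y > 0, HasDerivAt (fun t => t ^ (n + 1) * riccatiBessel (n + 2) t)
        (y ^ (n + 1) * riccatiBessel (n + 1) y) y := fun y hy =>
      ((hasDerivAt_pow (n + 1) y).mul (hasDerivAt_riccatiBessel (n + 1) hy.ne')).congr_deriv
        (by push_cast; field_simp; ring)
    have hG : ∀ y > 0, HasDerivAt (fun t : ℝ => t ^ (2 * n + 3))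
        ((2 * n + 3 : ℕ) * y ^ (2 * n + 2)) y := fun y _ => by
      simpa using hasDerivAt_pow (2 * n + 3) y
    have hbound : ∀ y > 0,
        |y ^ (n + 1) * riccatiBessel (n + 1) y| ≤ ((2 * n + 3 : ℕ) : ℝ) * y ^ (2 * n + 2) := by
      intro y hy
      rw [abs_mul, abs_of_pos (pow_pos hy _)]
      calc _ ≤ y ^ (n + 1) * y ^ (n + 1) := mul_le_mul_of_nonneg_left (ih hy) (by positivity)
        _ = 1 * y ^ (2 * n + 2) := by ring
        _ ≤ _ := mul_le_mul_of_nonneg_right (by norm_cast; omega) (by positivity)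
    have hG0 : Tendsto (fun t : ℝ => t ^ (2 * n + 3)) (𝓝[>] 0) (𝓝 0) :=
      tendsto_nhdsWithin_of_tendsto_nhds ((continuous_pow _).tendsto' 0 0 (by simp))
    have h := abs_le_of_abs_deriv_le_of_tendsto_zero hF hG hbound
      (tendsto_pow_mul_riccatiBessel (n + 1)) hG0 hx
    rw [abs_mul, abs_of_pos (pow_pos hx _)] at h
    exact le_of_mul_le_mul_left (h.trans_eq (by ring)) (pow_pos hx _)

lemma tendsto_riccatiBessel_nhdsGT_zero (n : ℕ) :
    Tendsto (riccatiBessel (n + 1)) (𝓝[>] 0) (𝓝 0) := by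
  refine squeeze_zero_norm' ?_
    (tendsto_nhdsWithin_of_tendsto_nhds ((continuous_pow (n + 1)).tendsto' 0 0 (by simp)))
  filter_upwards [self_mem_nhdsWithin] with x (hx : 0 < x)
  exact abs_riccatiBessel_le n hx

lemma add_pi_lt_of_riccatiBessel_eq_zero {n : ℕ} (hn : 1 ≤ n) {a b : ℝ} (ha : 0 < a)
    (hab : a < b) (hza : riccatiBessel (n + 1) a = 0) (hzb : riccatiBessel (n + 1) b = 0)
    (hne : ∀ x ∈ Ioo a b, riccatiBessel (n + 1) x ≠ 0) : a + π < b := by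
  have hn' : (0 : ℝ) < n := by exact_mod_cast hn
  refine ((solvesLinearODE_riccatiBessel n).mono fun x hx => ha.trans_le hx.1).add_pi_lt
    (fun x hx => ?_) hab hza hzb hne
  exact sub_lt_self 1 (div_pos (by positivity) (pow_pos (ha.trans hx.1) 2))

section ZeroEnumeration

variable {u : ℝ → ℝ} {j : ℕ → ℝ}

lemma ne_zero_of_lt_first_zero (hmono : ∀ m m', 1 ≤ m → m < m' → j m < j m')
    (hall : ∀ x, 0 < x → u x = 0 → ∃ m, 1 ≤ m ∧ x = j m) : ∀ x ∈ Ioo 0 (j 1), u x ≠ 0 := by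
  rintro x ⟨hx0, hx1⟩ hux
  obtain ⟨m, hm, rfl⟩ := hall x hx0 hux
  rcases hm.eq_or_lt with rfl | hm
  · exact hx1.false
  · exact hx1.not_gt (hmono 1 m le_rfl hm)

lemma ne_zero_of_between_zeros (hmono : ∀ m m', 1 ≤ m → m < m' → j m < j m')
    (hall : ∀ x, 0 < x → u x = 0 → ∃ m, 1 ≤ m ∧ x = j m) {m : ℕ} (hm : 1 ≤ m)
    (hpos : 0 < j m) : ∀ x ∈ Ioo (j m) (j (m + 1)), u x ≠ 0 := by
  rintro x ⟨hx1, hx2⟩ hux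
  obtain ⟨m', hm', rfl⟩ := hall x (hpos.trans hx1) hux
  rcases lt_trichotomy m' m with h | rfl | h
  · exact hx1.not_gt (hmono m' m hm' h)
  · exact hx1.false
  · rcases (Nat.succ_le_of_lt h).eq_or_lt with rfl | h'
    · exact hx2.false
    · exact hx2.not_gt (hmono (m + 1) m' (by omega) h')

end ZeroEnumeration

lemma sq_add_sq_lt_sq_of_add_lt {a b c : ℝ} (ha : 0 ≤ a) (hb : 0 ≤ b) (h : a + b < c) :
    a ^ 2 + b ^ 2 < c ^ 2 := by
  nlinarith [mul_nonneg ha hb]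

/-- For `n ≥ 1`, if `j m` enumerates (in increasing order, `m ≥ 1`)
all the positive zeros of `J_{n+1/2}`, then
`j m > (m−1)π + √((n+1/2)(n+5/2))`, and consequently
`j m ² > (m−1)²π² + (n+1/2)(n+5/2)`. -/
theorem stmt9 (n : ℕ) (hn : 1 ≤ n) (j : ℕ → ℝ)
    (hzero : ∀ m, 1 ≤ m → 0 < j m ∧ besselJhalf n (j m) = 0)
    (hmono : ∀ m m', 1 ≤ m → m < m' → j m < j m')
    (hall : ∀ x, 0 < x → besselJhalf n x = 0 → ∃ m, 1 ≤ m ∧ x = j m) :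
    ∀ m, 1 ≤ m →
      j m > ((m : ℝ) - 1) * Real.pi + Real.sqrt (((n : ℝ) + 1 / 2) * ((n : ℝ) + 5 / 2)) ∧
      (j m) ^ 2 > ((m : ℝ) - 1) ^ 2 * Real.pi ^ 2 + ((n : ℝ) + 1 / 2) * ((n : ℝ) + 5 / 2) := by
  have hu_zero : ∀ m, 1 ≤ m → riccatiBessel (n + 1) (j m) = 0 := fun m hm =>
    (besselJhalf_eq_zero_iff n (hzero m hm).1).1 (hzero m hm).2
  have hu_all : ∀ x, 0 < x → riccatiBessel (n + 1) x = 0 → ∃ m, 1 ≤ m ∧ x = j m :=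
    fun x hx hux => hall x hx ((besselJhalf_eq_zero_iff n hx).2 hux)
  have hfirst : ((n : ℝ) + 1 / 2) * (n + 5 / 2) < j 1 ^ 2 :=
    (solvesLinearODE_riccatiBessel n).lt_sq_of_first_zero (by exact_mod_cast hn)
      (tendsto_riccatiBessel_nhdsGT_zero n) (hzero 1 le_rfl).1 (hu_zero 1 le_rfl)
      (ne_zero_of_lt_first_zero hmono hu_all)
  have hlower : ∀ m : ℕ, 1 ≤ m → ((m : ℝ) - 1) * π + √((n + 1 / 2) * (n + 5 / 2)) < j m := by
    intro m hm
    induction m, hm using Nat.le_induction with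
    | base => simpa using (sqrt_lt' (hzero 1 le_rfl).1).2 hfirst
    | succ m hm ih =>
      have hpos := (hzero m hm).1
      have hgap := add_pi_lt_of_riccatiBessel_eq_zero hn hpos
        (hmono m (m + 1) hm m.lt_succ_self) (hu_zero m hm) (hu_zero (m + 1) (by omega))
        (ne_zero_of_between_zeros hmono hu_all hm hpos)
      push_cast
      linarith
  intro m hm
  have hA : (0 : ℝ) ≤ (m - 1) * π := mul_nonneg (by simp [hm]) pi_pos.le
  have hsq := sq_add_sq_lt_sq_of_add_lt hA (sqrt_nonneg _) (hlower m hm)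
  rw [mul_pow, sq_sqrt (by positivity)] at hsq
  exact ⟨hlower m hm, hsq⟩
end

section
/- Let R > 0, β > 0, and for an integer n ≥ 0 define φ_n(s) = (s+1)·R·P_n(√(s+1)·R) + n/R + β, where P_n(ξ) = 2·∑_{m=1}^∞ 1/(ξ² + j_{n+1/2,m}²) and j_{n+1/2,m} are the positive zeros of J_{n+1/2}. Then for all sufficiently large n, φ_n(−n²/(3R²)) > β. In particular, combined with φ_n(s) → −∞ as s decreases to −1 − (j_{n+1/2,1}/R)², the first zero of φ_n lies in the interval (−1 − (j_{n+1/2,1}/R)², −n²/(3R²)). -/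
open Real Finset

/-! At `s = -n²/(3R²)` one has `(s + 1)R² ≥ -n²/3`, while the zero estimate gives
`j_{n+1/2,m+1}² > (mπ + √((n+1/2)(n+5/2)))²`; since `(n+1/2)(n+5/2) - n²/3 > (4n/5)²`, every
denominator of the series exceeds `(mπ + 4n/5)²`. Comparing with a telescoping sum, the series is
at most `25/(16n²) + 5/(4πn) < 3/(2n)` for `n ≥ 2`, so the only negative part of `φ_n - β`,
namely `-(2n²/(3R))·∑`, is dominated by `n/R`. -/

-- The extra term `1/(c(Mc + a))` makes the bound telescope, since `1/y² ≤ 1/(xy)` for `x ≤ y`.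
lemma sum_range_one_div_mul_add_sq_add_le {a c : ℝ} (ha : 0 < a) (hc : 0 < c) (M : ℕ) :
    ∑ m ∈ range (M + 1), 1 / ((m : ℝ) * c + a) ^ 2 + 1 / (c * ((M : ℝ) * c + a))
      ≤ 1 / a ^ 2 + 1 / (c * a) := by
  induction M with
  | zero => simp
  | succ M ih =>
    set x := (M : ℝ) * c + a
    have hx : 0 < x := by positivity
    have hstep : 1 / (x + c) ^ 2 + 1 / (c * (x + c)) ≤ 1 / (c * x) := by
      have htel : 1 / (c * x) - 1 / (c * (x + c)) = 1 / (x * (x + c)) := by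
        field_simp
        ring
      have : 1 / (x + c) ^ 2 ≤ 1 / (x * (x + c)) :=
        one_div_le_one_div_of_le (by positivity) (by nlinarith)
      linarith
    rw [sum_range_succ]
    push_cast
    rw [show ((M : ℝ) + 1) * c + a = x + c by ring]
    linarith

lemma sum_range_one_div_mul_add_sq_le {a c : ℝ} (ha : 0 < a) (hc : 0 < c) (M : ℕ) :
    ∑ m ∈ range M, 1 / ((m : ℝ) * c + a) ^ 2 ≤ 1 / a ^ 2 + 1 / (c * a) := by
  cases M with
  | zero => simp only [sum_range_zero]; positivity
  | succ M =>
    have := sum_range_one_div_mul_add_sq_add_le ha hc M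
    have : 0 < 1 / (c * ((M : ℝ) * c + a)) := by positivity
    linarith

lemma tsum_le_of_le_one_div_mul_add_sq {f : ℕ → ℝ} {a c : ℝ} (ha : 0 < a) (hc : 0 < c)
    (hf₀ : ∀ m, 0 ≤ f m) (hf : ∀ m, f m ≤ 1 / ((m : ℝ) * c + a) ^ 2) :
    ∑' m, f m ≤ 1 / a ^ 2 + 1 / (c * a) :=
  Real.tsum_le_of_sum_range_le hf₀ fun M =>
    (sum_le_sum fun m _ => hf m).trans (sum_range_one_div_mul_add_sq_le ha hc M)

lemma sq_lt_add_sq_of_add_sqrt_lt {n c t x : ℝ} (hn : 0 ≤ n) (hc : 0 ≤ c) (ht : -n ^ 2 / 3 ≤ t)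
    (hx : c + √((n + 1 / 2) * (n + 5 / 2)) < x) :
    (c + 4 / 5 * n) ^ 2 < t + x ^ 2 := by
  set b := √((n + 1 / 2) * (n + 5 / 2))
  have hb₀ : 0 ≤ b := sqrt_nonneg _
  have hb_sq : b ^ 2 = (n + 1 / 2) * (n + 5 / 2) := sq_sqrt (by positivity)
  have hb : 4 / 5 * n ≤ b := by nlinarith
  have hcb : (c + b) ^ 2 < x ^ 2 := by nlinarith
  nlinarith [mul_nonneg hc (sub_nonneg.mpr hb)]

lemma one_div_sq_add_one_div_pi_mul_lt {n : ℝ} (hn : 2 ≤ n) :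
    1 / (4 / 5 * n) ^ 2 + 1 / (π * (4 / 5 * n)) < 3 / (2 * n) := by
  have hπ := pi_gt_three
  have key : 1 / (4 / 5 * n) ^ 2 + 1 / (π * (4 / 5 * n)) - 3 / (2 * n)
      = -(48 * π * n - 50 * π - 40 * n) / (32 * π * n ^ 2) := by
    field_simp
    ring
  have : 0 < 48 * π * n - 50 * π - 40 * n := by nlinarith
  have : -(48 * π * n - 50 * π - 40 * n) / (32 * π * n ^ 2) < 0 :=
    div_neg_of_neg_of_pos (by linarith) (by positivity)
  linarith

lemma add_div_pos_of_lt_three_div_two_mul {R n S : ℝ} (hR : 0 < R) (hn : 0 < n) (hS₀ : 0 ≤ S)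
    (hS : S < 3 / (2 * n)) :
    0 < 2 * (-n ^ 2 / (3 * R ^ 2) + 1) * R * S + n / R := by
  have key : 2 * (-n ^ 2 / (3 * R ^ 2) + 1) * R * S + n / R
      = 2 * R * S + n / R * (1 - 2 * n * S / 3) := by
    field_simp
    ring
  have : 2 * n * S < 3 := by rwa [lt_div_iff₀ (by positivity), mul_comm] at hS
  rw [key]
  have : 0 < 1 - 2 * n * S / 3 := by linarith
  positivity

theorem stmt10_general (R β : ℝ) (hR : 0 < R) (j : ℕ → ℕ → ℝ)
    (hest : ∀ n m, 1 ≤ m →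
      j n m > ((m : ℝ) - 1) * Real.pi + Real.sqrt (((n : ℝ) + 1 / 2) * ((n : ℝ) + 5 / 2))) :
    ∃ N : ℕ, ∀ n ≥ N,
      2 * (-(n : ℝ) ^ 2 / (3 * R ^ 2) + 1) * R *
          (∑' m : ℕ, 1 / ((-(n : ℝ) ^ 2 / (3 * R ^ 2) + 1) * R ^ 2 + (j n (m + 1)) ^ 2))
        + (n : ℝ) / R + β > β := by
  refine ⟨2, fun n hn₂ => ?_⟩
  have hn : (2 : ℝ) ≤ n := by exact_mod_cast hn₂
  have ht : -(n : ℝ) ^ 2 / 3 ≤ (-(n : ℝ) ^ 2 / (3 * R ^ 2) + 1) * R ^ 2 := by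
    field_simp
    nlinarith
  have hden : ∀ m : ℕ, ((m : ℝ) * π + 4 / 5 * n) ^ 2
      < (-(n : ℝ) ^ 2 / (3 * R ^ 2) + 1) * R ^ 2 + (j n (m + 1)) ^ 2 := fun m =>
    sq_lt_add_sq_of_add_sqrt_lt (by linarith) (by positivity) ht
      (by simpa using hest n (m + 1) (by omega))
  have hterm₀ : ∀ m : ℕ,
      0 ≤ 1 / ((-(n : ℝ) ^ 2 / (3 * R ^ 2) + 1) * R ^ 2 + (j n (m + 1)) ^ 2) := fun m =>
    (one_div_pos.mpr ((sq_nonneg _).trans_lt (hden m))).le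
  have hS := tsum_le_of_le_one_div_mul_add_sq (a := 4 / 5 * n) (by positivity) pi_pos hterm₀
    (fun m => one_div_le_one_div_of_le (by positivity) (hden m).le)
  linarith [add_div_pos_of_lt_three_div_two_mul hR (by linarith) (tsum_nonneg hterm₀)
    (hS.trans_lt (one_div_sq_add_one_div_pi_mul_lt hn))]

/-- Let `R, β > 0`, and let `j n m` (`m ≥ 1`) enumerate in increasing
order the positive zeros of `J_{n+1/2}`. Define (via the Mittag-Leffler series for
`P_n`, with `ξ² = (s+1)R²`)
`φ_n(s) = 2(s+1)R·∑_{m≥1} 1/((s+1)R² + j_{n+1/2,m}²) + n/R + β`.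
Assuming the estimate `j n m > (m−1)π + √((n+1/2)(n+5/2))`, for all sufficiently
large `n` one has `φ_n(−n²/(3R²)) > β`. -/
theorem stmt10 (R β : ℝ) (hR : 0 < R) (hβ : 0 < β) (j : ℕ → ℕ → ℝ)
    (hzero : ∀ n m, 1 ≤ m → 0 < j n m ∧ besselJhalf n (j n m) = 0)
    (hmono : ∀ n m m', 1 ≤ m → m < m' → j n m < j n m')
    (hall : ∀ n x, 0 < x → besselJhalf n x = 0 → ∃ m, 1 ≤ m ∧ x = j n m)
    (hest : ∀ n m, 1 ≤ m →
      j n m > ((m : ℝ) - 1) * Real.pi + Real.sqrt (((n : ℝ) + 1 / 2) * ((n : ℝ) + 5 / 2))) :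
    ∃ N : ℕ, ∀ n ≥ N,
      2 * (-(n : ℝ) ^ 2 / (3 * R ^ 2) + 1) * R *
          (∑' m : ℕ, 1 / ((-(n : ℝ) ^ 2 / (3 * R ^ 2) + 1) * R ^ 2 + (j n (m + 1)) ^ 2))
        + (n : ℝ) / R + β > β :=
  stmt10_general R β hR j hest
end

section
/- For every R > 0, the identity R²·P₀(R) + 1 + 6·P₀(R) − 1/P₀(R) = R³·P₀(R)·P₁'(R) holds, where P₀(R) = (1/R)coth(R) − 1/R², P₁(R) = 1/(R²·P₂(R) + 5) satisfies P₀(R) = 1/(R²·P₁(R) + 3), and P₁' is the derivative of P₁. -/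
/-- `P₀(R) = (1/R)·coth R − 1/R²`. -/
noncomputable def P0 (R : ℝ) : ℝ := (1 / R) * (Real.cosh R / Real.sinh R) - 1 / R ^ 2

/-- `P₁(R) = (1/P₀(R) − 3)/R²`, from the recurrence `P₀(R) = 1/(R²P₁(R)+3)`. -/
noncomputable def P1 (R : ℝ) : ℝ := (1 / P0 R - 3) / R ^ 2

/-!
With `D(x) = x cosh x − sinh x` one has `P₀ = D / (x² sinh x)` and `P₁ = sinh x / D − 3 / x²`,
so `P₁' = (x − sinh x cosh x) / D² + 6 / x³`. Clearing denominators, the identity becomes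
`R⁴ (cosh² R − sinh² R − 1) = 0`. The only analytic input is `D ≠ 0` away from `0`.
-/

open Real

lemma sinh_lt_mul_cosh {x : ℝ} (hx : 0 < x) : sinh x < x * cosh x := by
  obtain ⟨c, ⟨hc0, hcx⟩, hc⟩ := exists_hasDerivAt_eq_slope sinh cosh hx
    continuous_sinh.continuousOn (fun y _ => hasDerivAt_sinh y)
  have hcosh : cosh c < cosh x := cosh_lt_cosh.2 (by rwa [abs_of_pos hc0, abs_of_pos hx])
  rw [sinh_zero, sub_zero, sub_zero, eq_div_iff hx.ne'] at hc
  nlinarith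

lemma mul_cosh_sub_sinh_ne_zero {x : ℝ} (hx : x ≠ 0) : x * cosh x - sinh x ≠ 0 := by
  rcases hx.lt_or_gt with hneg | hpos
  · have := sinh_lt_mul_cosh (neg_pos.2 hneg)
    rw [sinh_neg, cosh_neg] at this
    linarith
  · linarith [sinh_lt_mul_cosh hpos]

lemma hasDerivAt_mul_cosh_sub_sinh (x : ℝ) :
    HasDerivAt (fun y => y * cosh y - sinh y) (x * sinh x) x :=
  (((hasDerivAt_id' x).mul (hasDerivAt_cosh x)).sub (hasDerivAt_sinh x)).congr_deriv (by ring)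

lemma P0_eq_div {x : ℝ} (hx : x ≠ 0) :
    P0 x = (x * cosh x - sinh x) / (x ^ 2 * sinh x) := by
  have hs : sinh x ≠ 0 := sinh_ne_zero.2 hx
  unfold P0
  field_simp

lemma P1_eq_sub {x : ℝ} (hx : x ≠ 0) :
    P1 x = sinh x / (x * cosh x - sinh x) - 3 / x ^ 2 := by
  rw [P1, P0_eq_div hx, one_div_div, sub_div, mul_div_assoc,
    mul_div_cancel_left₀ _ (pow_ne_zero 2 hx)]

lemma hasDerivAt_P1 {x : ℝ} (hx : x ≠ 0) :
    HasDerivAt P1 ((x - sinh x * cosh x) / (x * cosh x - sinh x) ^ 2 + 6 / x ^ 3) x := by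
  have hP1 : (fun y => sinh y / (y * cosh y - sinh y) - 3 / y ^ 2) =ᶠ[nhds x] P1 := by
    filter_upwards [eventually_ne_nhds hx] with y hy
    exact (P1_eq_sub hy).symm
  have hderiv : HasDerivAt (fun y => sinh y / (y * cosh y - sinh y) - 3 / y ^ 2) _ x :=
    ((hasDerivAt_sinh x).fun_div (hasDerivAt_mul_cosh_sub_sinh x)
        (mul_cosh_sub_sinh_ne_zero hx)).sub
      ((hasDerivAt_const x (3 : ℝ)).fun_div (hasDerivAt_pow 2 x) (pow_ne_zero 2 hx))
  refine (hderiv.congr_deriv ?_).congr_of_eventuallyEq hP1.symm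
  rw [show cosh x * (x * cosh x - sinh x) - sinh x * (x * sinh x) = x - sinh x * cosh x by
    linear_combination x * cosh_sq x]
  field_simp
  ring

/-- For every `R > 0`,
`R²·P₀(R) + 1 + 6·P₀(R) − 1/P₀(R) = R³·P₀(R)·P₁'(R)`. -/
theorem stmt14 (R : ℝ) (hR : 0 < R) :
    R ^ 2 * P0 R + 1 + 6 * P0 R - 1 / P0 R = R ^ 3 * P0 R * deriv P1 R := by
  have hs : sinh R ≠ 0 := sinh_ne_zero.2 hR.ne'
  have hD : R * cosh R - sinh R ≠ 0 := mul_cosh_sub_sinh_ne_zero hR.ne'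
  rw [(hasDerivAt_P1 hR.ne').deriv, P0_eq_div hR.ne']
  field_simp
  linear_combination R ^ 4 * cosh_sq R
end
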